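/- Suppose cos(α+θ) ≠ 0, cos(α+2θ) ≠ 0, cos(α+3θ) ≠ 0, sin(α+3θ) ≠ 0, and tan(α+θ) ≠ tan(α+3θ), and let x_FP = ℓ·(tan(α+θ) − tan(α+2θ))/(tan(α+θ) − tan(α+3θ)) and J = tan(α+θ)·cot(α+3θ). Then for every initial condition x₀ ∈ ℝ, the orbit defined by x_{n+1} = F(x_n) satisfies the exact formula x_n − x_FP = Jⁿ·(x₀ − x_FP) for every n ∈ ℕ. -/

import Mathlib

/-!
Up to the reflection identities `tan (π - y) = -tan y`, `cot (3π/2 - y) = tan y` and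
`tan (3π/2 - y) = cot y`, which hold for all `y` even with the junk values at the poles,
the return map is the affine map `x ↦ J x + ℓ (tan (α + 2θ) - tan (α + θ)) cot (α + 3θ)`.
Since `tan (α + 3θ) ≠ 0` and `tan (α + θ) ≠ tan (α + 3θ)`, the slope
`J = tan (α + θ) / tan (α + 3θ)` differs from `1`, so the map has the unique fixed point `x_FP`,
and an affine map multiplies the distance to its fixed point by its slope at every step.
-/

open Real

/-- The three-bounce return map of the bouncing robot. -/
noncomputable def bounceMap (ℓ α θ x : ℝ) : ℝ :=
  ((ℓ - x) * Real.tan (π - θ - α) + ℓ * Real.cot (3 * π / 2 - 2 * θ - α)) *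
    Real.tan (3 * π / 2 - α - 3 * θ)

theorem sub_eq_pow_mul_sub_of_forall_sub_eq_mul {R : Type*} [Ring R] {f : R → R} {p J : R}
    (hf : ∀ y, f y - p = J * (y - p)) {x : ℕ → R} (hx : ∀ n, x (n + 1) = f (x n)) (n : ℕ) :
    x n - p = J ^ n * (x 0 - p) := by
  induction n with
  | zero => rw [pow_zero, one_mul]
  | succ n ih => rw [hx, hf, ih, pow_succ', mul_assoc]

namespace Real

theorem cot_eq_inv_tan (y : ℝ) : cot y = (tan y)⁻¹ := by
  rw [cot_eq_cos_div_sin, tan_eq_sin_div_cos, inv_div]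

theorem tan_three_pi_div_two_sub (y : ℝ) : tan (3 * π / 2 - y) = cot y := by
  rw [show 3 * π / 2 - y = π / 2 - y + π by ring, tan_periodic, tan_pi_div_two_sub,
    cot_eq_inv_tan]

theorem cot_three_pi_div_two_sub (y : ℝ) : cot (3 * π / 2 - y) = tan y := by
  rw [cot_eq_inv_tan, tan_three_pi_div_two_sub, cot_eq_inv_tan, inv_inv]

end Real

theorem bounceMap_eq (ℓ α θ x : ℝ) :
    bounceMap ℓ α θ x = tan (α + θ) * cot (α + 3 * θ) * x
      + ℓ * (tan (α + 2 * θ) - tan (α + θ)) * cot (α + 3 * θ) := by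
  rw [bounceMap, show π - θ - α = π - (α + θ) by ring,
    show 3 * π / 2 - 2 * θ - α = 3 * π / 2 - (α + 2 * θ) by ring,
    show 3 * π / 2 - α - 3 * θ = 3 * π / 2 - (α + 3 * θ) by ring,
    tan_pi_sub, cot_three_pi_div_two_sub, tan_three_pi_div_two_sub]
  ring

theorem bounceMap_sub_fixedPoint (ℓ α θ x : ℝ) (h3 : cos (α + 3 * θ) ≠ 0)
    (h4 : sin (α + 3 * θ) ≠ 0) (h5 : tan (α + θ) ≠ tan (α + 3 * θ)) :
    bounceMap ℓ α θ x - ℓ * (tan (α + θ) - tan (α + 2 * θ)) / (tan (α + θ) - tan (α + 3 * θ)) =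
      tan (α + θ) * cot (α + 3 * θ) *
        (x - ℓ * (tan (α + θ) - tan (α + 2 * θ)) / (tan (α + θ) - tan (α + 3 * θ))) := by
  have ht3 : tan (α + 3 * θ) ≠ 0 := by
    rw [tan_eq_sin_div_cos]
    exact div_ne_zero h4 h3
  have hd : tan (α + θ) - tan (α + 3 * θ) ≠ 0 := sub_ne_zero.mpr h5
  rw [bounceMap_eq, cot_eq_inv_tan]
  generalize tan (α + θ) = t₁, tan (α + 2 * θ) = t₂, tan (α + 3 * θ) = t₃ at ht3 hd ⊢
  field_simp
  ring

theorem bounceMap_orbit_formula_general (ℓ α θ : ℝ)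
    (h3 : Real.cos (α + 3 * θ) ≠ 0) (h4 : Real.sin (α + 3 * θ) ≠ 0)
    (h5 : Real.tan (α + θ) ≠ Real.tan (α + 3 * θ))
    (xFP J : ℝ)
    (hFP : xFP = ℓ * (Real.tan (α + θ) - Real.tan (α + 2 * θ)) /
            (Real.tan (α + θ) - Real.tan (α + 3 * θ)))
    (hJ : J = Real.tan (α + θ) * Real.cot (α + 3 * θ))
    (x : ℕ → ℝ) (hx : ∀ n : ℕ, x (n + 1) = bounceMap ℓ α θ (x n)) :
    ∀ n : ℕ, x n - xFP = J ^ n * (x 0 - xFP) := by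
  subst hFP hJ
  exact sub_eq_pow_mul_sub_of_forall_sub_eq_mul
    (fun y ↦ bounceMap_sub_fixedPoint ℓ α θ y h3 h4 h5) hx

theorem bounceMap_orbit_formula (ℓ α θ : ℝ)
    (h1 : Real.cos (α + θ) ≠ 0) (h2 : Real.cos (α + 2 * θ) ≠ 0)
    (h3 : Real.cos (α + 3 * θ) ≠ 0) (h4 : Real.sin (α + 3 * θ) ≠ 0)
    (h5 : Real.tan (α + θ) ≠ Real.tan (α + 3 * θ))
    (xFP J : ℝ)
    (hFP : xFP = ℓ * (Real.tan (α + θ) - Real.tan (α + 2 * θ)) /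
            (Real.tan (α + θ) - Real.tan (α + 3 * θ)))
    (hJ : J = Real.tan (α + θ) * Real.cot (α + 3 * θ))
    (x : ℕ → ℝ) (hx : ∀ n : ℕ, x (n + 1) = bounceMap ℓ α θ (x n)) :
    ∀ n : ℕ, x n - xFP = J ^ n * (x 0 - xFP) :=
  bounceMap_orbit_formula_general ℓ α θ h3 h4 h5 xFP J hFP hJ x hx
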